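/- arXiv:2111.13922 — 3 statements merged into one kernel-verified Lean document; each statement's English description precedes it below -/
import Mathlib

section
/- There exists a commutative monoid T (with trivially acting group Γ = {0}) possessing Γ-order-ideals A and B such that A + B is not a Γ-order-ideal; in particular, the refinement hypothesis in the previous statement cannot be dropped. -/
open Pointwise

namespace JH

variable {Γ : Type*} {T : Type*} [AddCommMonoid T]

/-- `x ρ_H y` iff `(x+H) ∩ (y+H) ≠ ∅`. -/
def rho (H : Set T) (x y : T) : Prop := ∃ h₁ ∈ H, ∃ h₂ ∈ H, x + h₁ = y + h₂

/-- The congruence on `T` induced by a submonoid `I`. -/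
def subCon (I : AddSubmonoid T) : AddCon T where
  r := rho (I : Set T)
  iseqv := by
    constructor
    · exact fun x => ⟨0, I.zero_mem, 0, I.zero_mem, rfl⟩
    · rintro x y ⟨h₁, m₁, h₂, m₂, e⟩; exact ⟨h₂, m₂, h₁, m₁, e.symm⟩
    · rintro x y z ⟨h₁, m₁, h₂, m₂, e₁⟩ ⟨k₁, n₁, k₂, n₂, e₂⟩
      refine ⟨h₁ + k₁, I.add_mem m₁ n₁, k₂ + h₂, I.add_mem n₂ m₂, ?_⟩
      calc x + (h₁ + k₁) = (x + h₁) + k₁ := (add_assoc _ _ _).symm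
        _ = (y + h₂) + k₁ := by rw [e₁]
        _ = (y + k₁) + h₂ := add_right_comm _ _ _
        _ = (z + k₂) + h₂ := by rw [e₂]
        _ = z + (k₂ + h₂) := add_assoc _ _ _
  add' := by
    rintro w x y z ⟨h₁, m₁, h₂, m₂, e₁⟩ ⟨k₁, n₁, k₂, n₂, e₂⟩
    refine ⟨h₁ + k₁, I.add_mem m₁ n₁, h₂ + k₂, I.add_mem m₂ n₂, ?_⟩
    calc w + y + (h₁ + k₁) = (w + h₁) + (y + k₁) := add_add_add_comm _ _ _ _
      _ = (x + h₂) + (z + k₂) := by rw [e₁, e₂]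
      _ = x + z + (h₂ + k₂) := (add_add_add_comm _ _ _ _).symm

/-- The quotient monoid `T/I`. -/
abbrev QuotM (I : AddSubmonoid T) : Type _ := (subCon I).Quotient

variable [CommGroup Γ] [DistribMulAction Γ T]

/-- A `Γ`-order-ideal of a `Γ`-monoid: `α•a + β•b ∈ I ↔ a ∈ I ∧ b ∈ I`. -/
def IsOrdIdeal (Γ : Type*) {T : Type*} [CommGroup Γ] [AddCommMonoid T]
    [DistribMulAction Γ T] (I : Set T) : Prop :=
  (0 : T) ∈ I ∧ ∀ (α β : Γ) (a b : T), α • a + β • b ∈ I ↔ a ∈ I ∧ b ∈ I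

theorem IsOrdIdeal.add_mem {I : Set T} (h : IsOrdIdeal Γ I) {a b : T}
    (ha : a ∈ I) (hb : b ∈ I) : a + b ∈ I := by
  have := (h.2 1 1 a b).mpr ⟨ha, hb⟩
  simpa using this

/-- A `Γ`-order-ideal as an additive submonoid. -/
def IsOrdIdeal.asSubmonoid {I : Set T} (h : IsOrdIdeal Γ I) : AddSubmonoid T where
  carrier := I
  zero_mem' := h.1
  add_mem' := fun ha hb => h.add_mem ha hb

theorem IsOrdIdeal.smul_mem {I : Set T} (h : IsOrdIdeal Γ I) (α : Γ) {x : T}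
    (hx : x ∈ I) : α • x ∈ I := by
  have := (h.2 α 1 x 0).mpr ⟨hx, h.1⟩
  simpa using this

/-- The induced scalar action on the quotient. -/
def quotSMulFun {I : Set T} (h : IsOrdIdeal Γ I) (α : Γ) :
    QuotM h.asSubmonoid → QuotM h.asSubmonoid :=
  Quotient.map' (fun x => α • x) (by
    rintro x y ⟨h₁, m₁, h₂, m₂, e⟩
    exact ⟨α • h₁, h.smul_mem α m₁, α • h₂, h.smul_mem α m₂, by
      rw [← smul_add, ← smul_add, e]⟩)

/-- The induced `Γ`-action on the quotient monoid `T/I`. -/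
def quotAction {I : Set T} (h : IsOrdIdeal Γ I) :
    DistribMulAction Γ (QuotM h.asSubmonoid) where
  smul := quotSMulFun h
  one_smul q := by
    refine Quotient.inductionOn' q (fun x => ?_)
    show Quotient.mk'' ((1 : Γ) • x) = Quotient.mk'' x
    rw [one_smul]
  mul_smul α β q := by
    refine Quotient.inductionOn' q (fun x => ?_)
    show Quotient.mk'' ((α * β) • x) = Quotient.mk'' (α • β • x)
    rw [mul_smul]
  smul_zero α := by
    show Quotient.mk'' (α • (0 : T)) = Quotient.mk'' (0 : T)
    rw [smul_zero]
  smul_add α q r := by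
    refine Quotient.inductionOn₂' q r (fun x y => ?_)
    show Quotient.mk'' (α • (x + y)) = Quotient.mk'' (α • x + α • y)
    rw [smul_add]

/-- The `Γ`-action on a `Γ`-order-ideal, viewed as a submonoid. -/
def subtypeAction {J : Set T} (hJ : IsOrdIdeal Γ J) :
    DistribMulAction Γ ↥hJ.asSubmonoid where
  smul α x := ⟨α • (x : T), hJ.smul_mem α x.2⟩
  one_smul x := Subtype.ext (one_smul Γ (x : T))
  mul_smul α β x := Subtype.ext (mul_smul α β (x : T))
  smul_zero α := Subtype.ext (smul_zero α)
  smul_add α x y := Subtype.ext (smul_add α (x : T) (y : T))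

/-- The restriction of a set `I` to (the submonoid given by) an ideal `J`. -/
def restrictSet {J : Set T} (hJ : IsOrdIdeal Γ J) (I : Set T) :
    Set ↥hJ.asSubmonoid := {x | (x : T) ∈ I}

theorem restrict_isOrdIdeal {I J : Set T} (hI : IsOrdIdeal Γ I) (hJ : IsOrdIdeal Γ J) :
    @IsOrdIdeal Γ ↥hJ.asSubmonoid _ _ (subtypeAction hJ) (restrictSet hJ I) := by
  refine ⟨hI.1, fun α β a b => ?_⟩
  exact hI.2 α β (a : T) (b : T)

/-- The quotient `Γ`-monoid `J/I` of two `Γ`-order-ideals. -/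
abbrev QuotPair {I J : Set T} (hI : IsOrdIdeal Γ I) (hJ : IsOrdIdeal Γ J) : Type _ :=
  QuotM (@IsOrdIdeal.asSubmonoid Γ _ _ _ (subtypeAction hJ) _ (restrict_isOrdIdeal hI hJ))

/-- The induced `Γ`-action on `J/I`. -/
def quotPairAction {I J : Set T} (hI : IsOrdIdeal Γ I) (hJ : IsOrdIdeal Γ J) :
    DistribMulAction Γ (QuotPair hI hJ) :=
  letI := subtypeAction hJ
  quotAction (restrict_isOrdIdeal hI hJ)

/-- A simple `Γ`-monoid: nontrivial with no `Γ`-order-ideals except `0` and itself. -/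
def IsSimple (Γ : Type*) (M : Type*) [CommGroup Γ] [AddCommMonoid M]
    [DistribMulAction Γ M] : Prop :=
  (∃ x : M, x ≠ 0) ∧ ∀ I : Set M, IsOrdIdeal Γ I → I = {0} ∨ I = Set.univ

/-- A refinement monoid. -/
def Refinement (T : Type*) [AddCommMonoid T] : Prop :=
  ∀ a b c d : T, a + b = c + d →
    ∃ e₁ e₂ e₃ e₄ : T, a = e₁ + e₂ ∧ b = e₃ + e₄ ∧ c = e₁ + e₃ ∧ d = e₂ + e₄

/-- `Γ`-equivariant monoid isomorphism. -/
def IsGammaIso (Γ : Type*) (M N : Type*) [CommGroup Γ] [AddCommMonoid M]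
    [AddCommMonoid N] [DistribMulAction Γ M] [DistribMulAction Γ N] : Prop :=
  ∃ e : M ≃+ N, ∀ (α : Γ) (x : M), e (α • x) = α • (e x)

/-- A `Γ`-composition series of a `Γ`-monoid. -/
structure CompSeries (Γ : Type*) (M : Type*) [CommGroup Γ] [AddCommMonoid M]
    [DistribMulAction Γ M] where
  n : ℕ
  I : ℕ → Set M
  ideal : ∀ i, i ≤ n → IsOrdIdeal Γ (I i)
  bot : I 0 = {0}
  top : I n = Set.univ
  strict : ∀ i, i < n → I i ⊂ I (i + 1)
  simple : ∀ i (h : i < n),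
    @IsSimple Γ (QuotPair (ideal i h.le) (ideal (i + 1) h)) _ _
      (quotPairAction (ideal i h.le) (ideal (i + 1) h))

/-- `Γ`-Noetherian: every ascending chain of `Γ`-order-ideals stabilizes. -/
def GammaNoetherian (Γ : Type*) (T : Type*) [CommGroup Γ] [AddCommMonoid T]
    [DistribMulAction Γ T] : Prop :=
  ∀ A : ℕ → Set T, (∀ i, IsOrdIdeal Γ (A i)) → (∀ i, A i ⊆ A (i + 1)) →
    ∃ n, ∀ i, n ≤ i → A i = A n

/-- `Γ`-Artinian: every descending chain of `Γ`-order-ideals stabilizes. -/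
def GammaArtinian (Γ : Type*) (T : Type*) [CommGroup Γ] [AddCommMonoid T]
    [DistribMulAction Γ T] : Prop :=
  ∀ A : ℕ → Set T, (∀ i, IsOrdIdeal Γ (A i)) → (∀ i, A (i + 1) ⊆ A i) →
    ∃ n, ∀ i, n ≤ i → A i = A n

/-- Partial sums `I 0 + ⋯ + I (t-1)` of a family of subsets, as submonoids. -/
def sumSeq (I : ℕ → Set T) : ℕ → AddSubmonoid T
  | 0 => ⊥
  | t + 1 => sumSeq I t ⊔ AddSubmonoid.closure (I t)

end JH

namespace JH
open Pointwise in
/-- Auxiliary body for STATEMENT 7 (so the instances are available). -/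
def Stmt7Body (T : Type) [AddCommMonoid T] [DistribMulAction PUnit T]
    (A B : Set T) : Prop :=
  IsOrdIdeal PUnit A ∧ IsOrdIdeal PUnit B ∧ ¬ IsOrdIdeal PUnit (A + B)
end JH

set_option linter.constructorNameAsVariable false
namespace Stmt7Aux

inductive M : Type where
  | z | o | x | y | w | s | b
  deriving DecidableEq

open M

def add' : M → M → M
  | z, a => a
  | a, z => a
  | o, o => o | o, x => o | x, o => o | x, x => o
  | y, y => y | y, w => y | w, y => y | w, w => y
  | b, b => s
  | b, _ => b | _, b => b
  | _, _ => s

instance : Fintype M := ⟨⟨{z, o, x, y, w, s, b}, by decide⟩, fun a => by cases a <;> decide⟩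

instance : Add M := ⟨add'⟩
instance : Zero M := ⟨z⟩

instance : AddCommMonoid M where
  nsmul := nsmulRec
  zero_add a := by cases a <;> rfl
  add_zero a := by cases a <;> rfl
  add_comm a b := by revert a b; decide
  add_assoc a b c := by revert a b c; decide

instance : DistribMulAction PUnit M where
  smul _ a := a
  one_smul _ := rfl
  mul_smul _ _ _ := rfl
  smul_zero _ := rfl
  smul_add _ _ _ := rfl

def A : Set M := {z, o, x}
def B : Set M := {z, y, w}

lemma hA : JH.IsOrdIdeal PUnit A := by
  constructor
  · left; rfl
  · intro α β a b
    show a + b ∈ A ↔ a ∈ A ∧ b ∈ A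
    simp only [A, Set.mem_insert_iff, Set.mem_singleton_iff]
    revert a b; decide

lemma hB : JH.IsOrdIdeal PUnit B := by
  constructor
  · left; rfl
  · intro α β a b
    show a + b ∈ B ↔ a ∈ B ∧ b ∈ B
    simp only [B, Set.mem_insert_iff, Set.mem_singleton_iff]
    revert a b; decide

open Pointwise in
lemma hAB : ¬ JH.IsOrdIdeal PUnit (A + B) := by
  rintro ⟨-, h⟩
  have h2 := (h PUnit.unit PUnit.unit M.b M.b).mp
  have hbb : M.b + M.b ∈ A + B := by
    refine Set.mem_add.mpr ⟨o, by simp [A], y, by simp [B], rfl⟩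
  obtain ⟨hmem, -⟩ := h2 hbb
  obtain ⟨a, ha, c, hc, e⟩ := Set.mem_add.mp hmem
  simp only [A, B, Set.mem_insert_iff, Set.mem_singleton_iff] at ha hc
  rcases ha with rfl|rfl|rfl <;> rcases hc with rfl|rfl|rfl <;> exact absurd e (by decide)

end Stmt7Aux

open JH in
/-- there is a commutative monoid with trivially acting group
`Γ = PUnit` and Γ-order-ideals `A`, `B` such that `A + B` is not a
Γ-order-ideal: the refinement hypothesis cannot be dropped. -/
theorem stmt7 :
    ∃ (T : Type) (inst1 : AddCommMonoid T)
      (inst2 : @DistribMulAction PUnit T _ inst1.toAddMonoid) (A B : Set T),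
      (∀ (γ : PUnit) (x : T), @SMul.smul PUnit T inst2.toSMul γ x = x) ∧
      @Stmt7Body T inst1 inst2 A B :=
  ⟨Stmt7Aux.M, inferInstance, inferInstance, Stmt7Aux.A, Stmt7Aux.B,
    fun _ _ => rfl, Stmt7Aux.hA, Stmt7Aux.hB, Stmt7Aux.hAB⟩
end

section
/- Let A and B be Γ-order-ideals of a commutative refinement Γ-monoid T with A ∩ B = {0}. Then (A+B)/A is isomorphic to B as monoids, via the map ρ_A(a+b) ↦ b. -/
/-!
Every element of `A + B` is `a + b` with `a ∈ A`, `b ∈ B`, and its `B`-part is unique: refining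
`a + b = a' + b'` produces cross terms lying in `A ∩ B = {0}`. The `B`-part is therefore a
surjective homomorphism `A + B → B`, and its kernel congruence is exactly `ρ_A`.
-/

open Pointwise

namespace JH

variable {Γ T : Type*} [CommGroup Γ] [AddCommMonoid T] [DistribMulAction Γ T] {A B : Set T}

theorem IsOrdIdeal.add_mem_iff {I : Set T} (hI : IsOrdIdeal Γ I) {a b : T} :
    a + b ∈ I ↔ a ∈ I ∧ b ∈ I := by
  simpa using hI.2 1 1 a b

theorem eq_of_add_eq_add_of_inter_eq_zero (hT : Refinement T)
    (hA : IsOrdIdeal Γ A) (hB : IsOrdIdeal Γ B) (hAB : A ∩ B = {0})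
    {a a' b b' : T} (ha : a ∈ A) (ha' : a' ∈ A) (hb : b ∈ B) (hb' : b' ∈ B)
    (h : a + b = a' + b') : b = b' := by
  have eq_zero : ∀ {x}, x ∈ A → x ∈ B → x = 0 := fun hxA hxB =>
    Set.eq_of_mem_singleton (hAB ▸ ⟨hxA, hxB⟩)
  obtain ⟨e₁, e₂, e₃, e₄, rfl, rfl, rfl, rfl⟩ := hT a b a' b' h
  have he₂ : e₂ = 0 := eq_zero (hA.add_mem_iff.1 ha).2 (hB.add_mem_iff.1 hb').1
  have he₃ : e₃ = 0 := eq_zero (hA.add_mem_iff.1 ha').2 (hB.add_mem_iff.1 hb).1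
  rw [he₂, he₃]

noncomputable def supRightPart {P Q : AddSubmonoid T} (x : ↥(P ⊔ Q)) : ↥Q :=
  ⟨_, (AddSubmonoid.mem_sup.1 x.2).choose_spec.2.choose_spec.1⟩

theorem exists_add_supRightPart {P Q : AddSubmonoid T} (x : ↥(P ⊔ Q)) :
    ∃ p ∈ P, p + (supRightPart x : T) = x :=
  ⟨_, (AddSubmonoid.mem_sup.1 x.2).choose_spec.1,
    (AddSubmonoid.mem_sup.1 x.2).choose_spec.2.choose_spec.2⟩

theorem supRightPart_eq (hT : Refinement T) (hA : IsOrdIdeal Γ A) (hB : IsOrdIdeal Γ B)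
    (hAB : A ∩ B = {0}) {x : ↥(hA.asSubmonoid ⊔ hB.asSubmonoid)} {a b : T} (ha : a ∈ A)
    (hb : b ∈ B) (hx : a + b = x) : supRightPart x = ⟨b, hb⟩ := by
  obtain ⟨a', ha', hx'⟩ := exists_add_supRightPart x
  exact Subtype.ext <| eq_of_add_eq_add_of_inter_eq_zero hT hA hB hAB ha' ha
    (supRightPart x).2 hb (hx'.trans hx.symm)

noncomputable def supRightPartHom (hT : Refinement T) (hA : IsOrdIdeal Γ A)
    (hB : IsOrdIdeal Γ B) (hAB : A ∩ B = {0}) :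
    ↥(hA.asSubmonoid ⊔ hB.asSubmonoid) →+ ↥hB.asSubmonoid where
  toFun := supRightPart
  map_zero' := supRightPart_eq hT hA hB hAB hA.1 hB.1 (add_zero 0)
  map_add' x y := by
    obtain ⟨a, ha, hx⟩ := exists_add_supRightPart x
    obtain ⟨a', ha', hy⟩ := exists_add_supRightPart y
    refine supRightPart_eq hT hA hB hAB (hA.add_mem ha ha') (supRightPart x + supRightPart y).2 ?_
    simp only [AddSubmonoid.coe_add]
    rw [← hx, ← hy, add_add_add_comm]

theorem supRightPartHom_surjective (hT : Refinement T) (hA : IsOrdIdeal Γ A)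
    (hB : IsOrdIdeal Γ B) (hAB : A ∩ B = {0}) :
    Function.Surjective (supRightPartHom hT hA hB hAB) :=
  fun b => ⟨⟨b, AddSubmonoid.mem_sup_right b.2⟩,
    supRightPart_eq hT hA hB hAB hA.1 b.2 (zero_add _)⟩

theorem ker_supRightPartHom (hT : Refinement T) (hA : IsOrdIdeal Γ A) (hB : IsOrdIdeal Γ B)
    (hAB : A ∩ B = {0}) :
    AddCon.ker (supRightPartHom hT hA hB hAB) =
      subCon (hA.asSubmonoid.comap (hA.asSubmonoid ⊔ hB.asSubmonoid).subtype) := by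
  refine AddCon.ext fun x y => ?_
  obtain ⟨a, ha, hx⟩ := exists_add_supRightPart x
  obtain ⟨a', ha', hy⟩ := exists_add_supRightPart y
  rw [AddCon.ker_rel]
  constructor
  · intro hxy
    refine ⟨⟨a', AddSubmonoid.mem_sup_left ha'⟩, ha',
      ⟨a, AddSubmonoid.mem_sup_left ha⟩, ha, Subtype.ext ?_⟩
    change supRightPart x = supRightPart y at hxy
    change (x : T) + a' = y + a
    rw [← hx, ← hy, hxy, add_right_comm, add_right_comm a', add_comm a]
  · rintro ⟨u, hu, v, hv, hxy⟩
    have hxy : a + supRightPart x + u = a' + supRightPart y + v := by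
      rw [hx, hy, ← AddSubmonoid.coe_add, ← AddSubmonoid.coe_add, hxy]
    have hau : a + u ∈ A := hA.add_mem ha hu
    have hav : a' + v ∈ A := hA.add_mem ha' hv
    change supRightPart x = supRightPart y
    refine Subtype.ext <| eq_of_add_eq_add_of_inter_eq_zero hT hA hB hAB hau hav
      (supRightPart x).2 (supRightPart y).2 ?_
    rw [add_right_comm, hxy, add_right_comm]

end JH

open JH in
/-- if `A ∩ B = {0}` then `(A+B)/A ≅ B`, via `ρ_A(a+b) ↦ b`. -/
theorem stmt8 {Γ T : Type*} [CommGroup Γ] [AddCommMonoid T] [DistribMulAction Γ T]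
    (hT : Refinement T) {A B : Set T}
    (hA : IsOrdIdeal Γ A) (hB : IsOrdIdeal Γ B) (hAB : A ∩ B = {0}) :
    ∃ e : QuotM ((hA.asSubmonoid).comap
        (hA.asSubmonoid ⊔ hB.asSubmonoid).subtype) ≃+ ↥hB.asSubmonoid,
      ∀ (a b : T) (ha : a ∈ A) (hb : b ∈ B),
        e (AddCon.mk' _ (⟨a + b,
            add_mem (AddSubmonoid.mem_sup_left ha) (AddSubmonoid.mem_sup_right hb)⟩ :
            ↥(hA.asSubmonoid ⊔ hB.asSubmonoid))) = ⟨b, hb⟩ := by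
  exact ⟨(AddCon.congr (AddEquiv.refl _) (ker_supRightPartHom hT hA hB hAB).symm).trans
    (AddCon.quotientKerEquivOfSurjective _ (supRightPartHom_surjective hT hA hB hAB)),
    fun _ _ ha hb => supRightPart_eq hT hA hB hAB ha hb rfl⟩
end

section
/- Let T be a commutative refinement Γ-monoid and Q, L, N Γ-order-ideals of T with L ⊆ Q. Then Q/(L + (Q ∩ N)) ≅ (Q+N)/(L+N). -/
open Pointwise

open JH in
/-- for Γ-order-ideals `Q`, `L`, `N` with `L ⊆ Q` of a refinement
Γ-monoid, `Q/(L + (Q ∩ N)) ≅ (Q+N)/(L+N)`. -/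
theorem stmt13 {Γ T : Type*} [CommGroup Γ] [AddCommMonoid T] [DistribMulAction Γ T]
    (hT : Refinement T) {Q L N : Set T}
    (hQ : IsOrdIdeal Γ Q) (hL : IsOrdIdeal Γ L) (hN : IsOrdIdeal Γ N)
    (hLQ : L ⊆ Q) :
    Nonempty
      (QuotM (((hL.asSubmonoid ⊔ (hQ.asSubmonoid ⊓ hN.asSubmonoid))).comap
          hQ.asSubmonoid.subtype)
        ≃+
       QuotM ((hL.asSubmonoid ⊔ hN.asSubmonoid).comap
          (hQ.asSubmonoid ⊔ hN.asSubmonoid).subtype)) := by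
  classical
  have memsplit : ∀ {I : Set T}, IsOrdIdeal Γ I → ∀ {a b : T}, a + b ∈ I → a ∈ I ∧ b ∈ I := by
    intro I hI a b hab
    exact (hI.2 1 1 a b).mp (by simpa using hab)
  set K₁ := ((hL.asSubmonoid ⊔ (hQ.asSubmonoid ⊓ hN.asSubmonoid))).comap
      hQ.asSubmonoid.subtype with hK₁def
  set K₂ := (hL.asSubmonoid ⊔ hN.asSubmonoid).comap
      (hQ.asSubmonoid ⊔ hN.asSubmonoid).subtype with hK₂def
  have hle : hL.asSubmonoid ⊔ (hQ.asSubmonoid ⊓ hN.asSubmonoid) ≤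
      hL.asSubmonoid ⊔ hN.asSubmonoid := sup_le_sup_left inf_le_right _
  -- the underlying map on representatives
  let tf : ↥hQ.asSubmonoid → ↥(hQ.asSubmonoid ⊔ hN.asSubmonoid) :=
    fun x => ⟨(x : T), AddSubmonoid.mem_sup_left x.2⟩
  have resp : ∀ x y : ↥hQ.asSubmonoid, (subCon K₁) x y → (subCon K₂) (tf x) (tf y) := by
    rintro x y ⟨h₁, m₁, h₂, m₂, e⟩
    refine ⟨⟨(h₁ : T), AddSubmonoid.mem_sup_left h₁.2⟩, hle m₁,
      ⟨(h₂ : T), AddSubmonoid.mem_sup_left h₂.2⟩, hle m₂, ?_⟩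
    exact Subtype.ext (show ((x : T) + (h₁ : T)) = (y : T) + (h₂ : T) from congrArg Subtype.val e)
  let g : QuotM K₁ → QuotM K₂ := Quotient.map' tf resp
  have gmk : ∀ x, g (Quotient.mk'' x) = Quotient.mk'' (tf x) := fun _ => rfl
  have ginj : Function.Injective g := by
    intro a b
    refine Quotient.inductionOn₂' a b (fun x y h => ?_)
    have rel : (subCon K₂) (tf x) (tf y) := Quotient.exact' h
    obtain ⟨h₁, m₁, h₂, m₂, e⟩ := rel
    have e' : (x : T) + (h₁ : T) = (y : T) + (h₂ : T) := congrArg Subtype.val e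
    obtain ⟨l₁, hl₁, n₁, hn₁, hsum₁⟩ := AddSubmonoid.mem_sup.mp m₁
    obtain ⟨l₂, hl₂, n₂, hn₂, hsum₂⟩ := AddSubmonoid.mem_sup.mp m₂
    have key : ((x : T) + l₁) + n₁ = ((y : T) + l₂) + n₂ := by
      rw [add_assoc, add_assoc, hsum₁, hsum₂]; exact e'
    obtain ⟨e₁, e₂, e₃, e₄, r₁, r₂, r₃, r₄⟩ := hT _ _ _ _ key
    have hxl₁Q : (x : T) + l₁ ∈ Q := hQ.add_mem x.2 (hLQ hl₁)
    have hyl₂Q : (y : T) + l₂ ∈ Q := hQ.add_mem y.2 (hLQ hl₂)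
    have e₂Q : e₂ ∈ Q := (memsplit hQ (r₁ ▸ hxl₁Q)).2
    have e₃Q : e₃ ∈ Q := (memsplit hQ (r₃ ▸ hyl₂Q)).2
    have e₃N : e₃ ∈ N := (memsplit hN (r₂ ▸ hn₁)).1
    have e₂N : e₂ ∈ N := (memsplit hN (r₄ ▸ hn₂)).1
    refine Quotient.sound' ?_
    refine ⟨⟨l₁ + e₃, hQ.add_mem (hLQ hl₁) e₃Q⟩,
      AddSubmonoid.add_mem _ (AddSubmonoid.mem_sup_left hl₁)
        (AddSubmonoid.mem_sup_right (AddSubmonoid.mem_inf.mpr ⟨e₃Q, e₃N⟩)),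
      ⟨l₂ + e₂, hQ.add_mem (hLQ hl₂) e₂Q⟩,
      AddSubmonoid.add_mem _ (AddSubmonoid.mem_sup_left hl₂)
        (AddSubmonoid.mem_sup_right (AddSubmonoid.mem_inf.mpr ⟨e₂Q, e₂N⟩)), ?_⟩
    refine Subtype.ext ?_
    show (x : T) + (l₁ + e₃) = (y : T) + (l₂ + e₂)
    calc (x : T) + (l₁ + e₃) = ((x : T) + l₁) + e₃ := (add_assoc _ _ _).symm
      _ = (e₁ + e₂) + e₃ := by rw [r₁]
      _ = (e₁ + e₃) + e₂ := by rw [add_assoc, add_assoc, add_comm e₂]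
      _ = ((y : T) + l₂) + e₂ := by rw [← r₃]
      _ = (y : T) + (l₂ + e₂) := add_assoc _ _ _
  have gsurj : Function.Surjective g := by
    intro b
    refine Quotient.inductionOn' b (fun z => ?_)
    obtain ⟨q, hq, n, hn, hqn⟩ := AddSubmonoid.mem_sup.mp z.2
    refine ⟨Quotient.mk'' ⟨q, hq⟩, ?_⟩
    rw [gmk]
    refine Quotient.sound' ?_
    refine ⟨⟨n, AddSubmonoid.mem_sup_right hn⟩, AddSubmonoid.mem_sup_right hn,
      0, K₂.zero_mem, Subtype.ext ?_⟩
    show q + n = (z : T) + 0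
    rw [add_zero]; exact hqn
  let f : QuotM K₁ →+ QuotM K₂ :=
    { toFun := g
      map_zero' := rfl
      map_add' := by
        intro a b
        refine Quotient.inductionOn₂' a b (fun x y => ?_)
        rfl }
  exact ⟨AddEquiv.ofBijective f ⟨ginj, gsurj⟩⟩
end
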